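/- Let X and Y be geodesic metric spaces. A homeomorphism f : X → Y is weakly H-quasisymmetric for some H ≥ 1 if and only if f is η-quasisymmetric for some increasing homeomorphism η : [0,∞) → [0,∞). -/

import Mathlib

/-
Quasisymmetry gives weak quasisymmetry with `H = max (η 1) 1`. Conversely, let `f` be weakly
`H`-quasisymmetric and `t = |xa| / |xb|`. Splitting a geodesic from `x` to `a` into `⌊t⌋ + 1`
pieces, each no longer than `|xb|`, and applying the weak condition at each division point gives
`|f x f a| ≤ H (1 + H) ^ ⌊t⌋ |f x f b|`. For small `t` one splits a geodesic from `f x` to `f b`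
into `m` pieces instead: if `|f x f a| > 2H |f x f b| / m`, the weak condition keeps each
successive preimage of a division point within twice the previous distance plus `|xa|` of `x`,
so `|xb| < 2 ^ m |xa|`. Choosing `m ≈ log₂ (1 / t)` gives `|f x f a| / |f x f b| ≲ H / log (1 / t)`.
An explicit homeomorphism of `[0, ∞)` dominates both bounds.
-/

def IsGeodesicSpace (X : Type*) [MetricSpace X] : Prop :=
  ∀ x y : X, ∃ γ : ℝ → X, γ 0 = x ∧ γ (dist x y) = y ∧
    ∀ s ∈ Set.Icc (0 : ℝ) (dist x y), ∀ t ∈ Set.Icc (0 : ℝ) (dist x y),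
      dist (γ s) (γ t) = |s - t|

open Set Real

theorem exists_two_pow_le_and_log_le {s : ℝ} (hs : 2 ≤ s) :
    ∃ m : ℕ, 2 ^ m ≤ s ∧ log (1 + s) ≤ 3 * m := by
  obtain ⟨m, hm, hsm⟩ := exists_nat_pow_near (by linarith : 1 ≤ s) (by norm_num : (1 : ℝ) < 2)
  have hm1 : 1 ≤ m := by
    by_contra! h0
    simp only [Nat.lt_one_iff.1 h0, zero_add, pow_one] at hsm
    linarith
  refine ⟨m, hm, ?_⟩
  have hlog : log (1 + s) ≤ log (2 ^ (m + 2)) :=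
    log_le_log (by linarith) (by rw [pow_succ]; linarith)
  rw [Real.log_pow, Nat.cast_add, Nat.cast_two] at hlog
  have hm1' : (1 : ℝ) ≤ m := by exact_mod_cast hm1
  nlinarith [log_two_lt_d9, log_two_gt_d9]

theorem div_log_one_add_inv_nonneg {c t : ℝ} (hc : 0 ≤ c) (ht : 0 ≤ t) :
    0 ≤ c / log (1 + t⁻¹) :=
  div_nonneg hc (log_nonneg (le_add_of_nonneg_right (inv_nonneg.2 ht)))

theorem monotoneOn_div_log_one_add_inv {c : ℝ} (hc : 0 ≤ c) :
    MonotoneOn (fun t => c / log (1 + t⁻¹)) (Ici 0) := by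
  intro s hs t ht hst
  rcases (mem_Ici.1 hs).eq_or_lt with rfl | hs0
  · simpa using div_log_one_add_inv_nonneg hc ht
  · have ht0 := hs0.trans_le hst
    exact div_le_div_of_nonneg_left hc (log_pos (lt_add_of_pos_right 1 (inv_pos.2 ht0)))
      (log_le_log (by positivity) (by gcongr))

theorem continuousOn_div_log_one_add_inv (c : ℝ) :
    ContinuousOn (fun t => c / log (1 + t⁻¹)) (Ici 0) := by
  intro t ht
  rcases (mem_Ici.1 ht).eq_or_lt with rfl | ht0
  · rw [← continuousWithinAt_Ioi_iff_Ici, ContinuousWithinAt]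
    simp only [inv_zero, add_zero, log_one, div_zero]
    exact (tendsto_log_atTop.comp
      (Filter.tendsto_atTop_add_const_left _ 1 tendsto_inv_nhdsGT_zero)).const_div_atTop c
  · have hlog : log (1 + t⁻¹) ≠ 0 := (log_pos (lt_add_of_pos_right 1 (inv_pos.2 ht0))).ne'
    have hpos : 1 + t⁻¹ ≠ 0 := by positivity
    exact (continuousAt_const.div ((continuousAt_const.add (continuousAt_inv₀ ht0.ne')).log hpos)
      hlog).continuousWithinAt

/-- The exponential term dominates the large-scale bound of
`IsWeaklyQuasisymmetric.dist_le_mul_exp` and makes the function onto `[0, ∞)`; the logarithmic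
term dominates the small-scale bound of `IsWeaklyQuasisymmetric.dist_mul_log_le`. Both terms
vanish at `t = 0`, the second one because `0⁻¹ = 0` and `log 1 = 0`. -/
noncomputable def qsDistortion (H t : ℝ) : ℝ :=
  2 * H * (exp (2 * H * t) - 1) + 6 * H / log (1 + t⁻¹)

theorem qsDistortion_zero (H : ℝ) : qsDistortion H 0 = 0 := by simp [qsDistortion]

theorem qsDistortion_continuousOn (H : ℝ) : ContinuousOn (qsDistortion H) (Ici 0) :=
  (Continuous.continuousOn (by fun_prop)).add (continuousOn_div_log_one_add_inv (6 * H))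

theorem qsDistortion_strictMonoOn {H : ℝ} (hH : 0 < H) :
    StrictMonoOn (qsDistortion H) (Ici 0) := fun s hs t ht hst =>
  add_lt_add_of_lt_of_le (by gcongr)
    (monotoneOn_div_log_one_add_inv (by positivity) hs ht hst.le)

theorem qsDistortion_surjOn {H : ℝ} (hH : 0 < H) :
    SurjOn (qsDistortion H) (Ici 0) (Ici 0) := by
  intro y hy
  set T := y / (4 * H ^ 2)
  have hT : 0 ≤ T := div_nonneg hy (by positivity)
  have hyT : y ≤ qsDistortion H T := by
    have hexp := add_one_le_exp (2 * H * T)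
    have hlog := div_log_one_add_inv_nonneg (c := 6 * H) (by positivity) hT
    have hTy : 4 * H ^ 2 * T = y := mul_div_cancel₀ _ (by positivity)
    unfold qsDistortion
    nlinarith
  obtain ⟨t, ht, rfl⟩ := intermediate_value_Icc hT
    ((qsDistortion_continuousOn H).mono Icc_subset_Ici_self) ⟨by rwa [qsDistortion_zero], hyT⟩
  exact ⟨t, ht.1, rfl⟩

section

variable {X Y : Type*} [MetricSpace X] [MetricSpace Y]

def IsWeaklyQuasisymmetric (H : ℝ) (f : X → Y) : Prop :=
  ∀ x a b, dist x a ≤ dist x b → dist (f x) (f a) ≤ H * dist (f x) (f b)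

theorem IsGeodesicSpace.exists_equally_spaced (hX : IsGeodesicSpace X) (x y : X) {m : ℕ}
    (hm : 0 < m) : ∃ u : ℕ → X, u 0 = x ∧ u m = y ∧
      ∀ i ≤ m, ∀ j ≤ m, dist (u i) (u j) = |(i : ℝ) - j| * (dist x y / m) := by
  obtain ⟨γ, hγ0, hγ1, hγ⟩ := hX x y
  have hm' : (0 : ℝ) < m := by exact_mod_cast hm
  have hmem : ∀ i ≤ m, (i : ℝ) * (dist x y / m) ∈ Icc 0 (dist x y) := fun i hi =>
    ⟨by positivity, by
      calc (i : ℝ) * (dist x y / m) ≤ m * (dist x y / m) := by gcongr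
        _ = dist x y := mul_div_cancel₀ _ hm'.ne'⟩
  refine ⟨fun i => γ (i * (dist x y / m)), by simpa using hγ0, ?_, fun i hi j hj => ?_⟩
  · simpa only [mul_div_cancel₀ _ hm'.ne'] using hγ1
  · rw [hγ _ (hmem i hi) _ (hmem j hj), ← sub_mul, abs_mul,
      abs_of_nonneg (a := dist x y / m) (by positivity)]

namespace IsWeaklyQuasisymmetric

variable {H : ℝ}

theorem dist_le_mul_pow (hX : IsGeodesicSpace X) {f : X → Y} (hf : IsWeaklyQuasisymmetric H f)
    (hH : 0 ≤ H) {x a b : X} (n : ℕ) (h : dist x a ≤ (n + 1) * dist x b) :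
    dist (f x) (f a) ≤ H * (1 + H) ^ n * dist (f x) (f b) := by
  obtain ⟨p, hp0, hpa, hp⟩ := hX.exists_equally_spaced x a n.succ_pos
  set δ := dist x a / (n + 1 : ℕ)
  have hδ : δ ≤ dist x b := by
    rw [div_le_iff₀ (by positivity)]; push_cast; linarith
  have hpk : ∀ k ≤ n, dist (p k) (p (k + 1)) = δ := fun k hk => by
    rw [hp k (by omega) (k + 1) (by omega)]; push_cast; norm_num
  suffices ∀ k ≤ n, dist (f x) (f (p (k + 1))) ≤ H * (1 + H) ^ k * dist (f x) (f b) by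
    simpa [hpa] using this n le_rfl
  intro k hk
  induction k with
  | zero =>
    simpa using hf x (p 1) b (by simpa [← hp0, hpk 0 hk] using hδ)
  | succ k ih =>
    have hfar : dist (p (k + 1)) (p (k + 2)) ≤ dist (p (k + 1)) x := by
      rw [hpk (k + 1) hk, ← hp0, hp (k + 1) (by omega) 0 (by omega), Nat.cast_zero, sub_zero,
        Nat.abs_cast]
      exact le_mul_of_one_le_left (by positivity) (Nat.one_le_cast.2 (by omega))
    have hstep := hf _ _ x hfar
    rw [dist_comm (f (p (k + 1))) (f x)] at hstep
    have hk' := ih (by omega)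
    calc dist (f x) (f (p (k + 1 + 1)))
        ≤ dist (f x) (f (p (k + 1))) + dist (f (p (k + 1))) (f (p (k + 2))) := dist_triangle _ _ _
      _ ≤ (1 + H) * dist (f x) (f (p (k + 1))) := by linarith
      _ ≤ (1 + H) * (H * (1 + H) ^ k * dist (f x) (f b)) := by gcongr
      _ = H * (1 + H) ^ (k + 1) * dist (f x) (f b) := by ring

theorem dist_le_mul_exp (hX : IsGeodesicSpace X) {f : X → Y} (hf : IsWeaklyQuasisymmetric H f)
    (hH : 0 ≤ H) {x a b : X} (hxb : x ≠ b) :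
    dist (f x) (f a) ≤ H * exp (H * (dist x a / dist x b)) * dist (f x) (f b) := by
  have hR : 0 < dist x b := dist_pos.2 hxb
  set t := dist x a / dist x b
  have ht : 0 ≤ t := by positivity
  have hn : dist x a ≤ (⌊t⌋₊ + 1) * dist x b := by
    rw [← div_le_iff₀ hR]; exact (Nat.lt_floor_add_one t).le
  have hpow : (1 + H) ^ ⌊t⌋₊ ≤ exp (H * t) :=
    calc (1 + H) ^ ⌊t⌋₊ ≤ exp H ^ ⌊t⌋₊ := by
          gcongr; linarith [add_one_le_exp H]
      _ = exp (H * ⌊t⌋₊) := by rw [← exp_nat_mul, mul_comm]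
      _ ≤ exp (H * t) := by gcongr; exact Nat.floor_le ht
  calc dist (f x) (f a) ≤ H * (1 + H) ^ ⌊t⌋₊ * dist (f x) (f b) := hf.dist_le_mul_pow hX hH _ hn
    _ ≤ H * exp (H * t) * dist (f x) (f b) := by gcongr

theorem dist_lt_dist_add_dist {f : X → Y} (hf : IsWeaklyQuasisymmetric H f) (hH : 0 ≤ H)
    {x a u v : X} {d : ℝ} (hd : 2 * H * d < dist (f x) (f a)) (huv : dist (f u) (f v) ≤ d) :
    dist u v < dist u x + dist x a := by
  by_contra! h
  have hx := hf u x v (le_trans (le_add_of_nonneg_right dist_nonneg) h)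
  have ha := hf u a v ((dist_triangle u x a).trans h)
  have hxa := dist_triangle (f x) (f u) (f a)
  rw [dist_comm (f x) (f u)] at hxa
  linarith [mul_le_mul_of_nonneg_left huv hH]

theorem dist_le_two_pow_sub_one_mul {f : X → Y} (hf : IsWeaklyQuasisymmetric H f) (hH : 0 ≤ H)
    {x a : X} {u : ℕ → X} {d : ℝ} (hu0 : u 0 = x) (hd : 2 * H * d < dist (f x) (f a)) {m : ℕ}
    (hgap : ∀ i < m, dist (f (u i)) (f (u (i + 1))) ≤ d) :
    dist x (u m) ≤ (2 ^ m - 1) * dist x a := by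
  induction m with
  | zero => simp [hu0]
  | succ m ih =>
    specialize ih fun i hi => hgap i (by omega)
    have hstep := hf.dist_lt_dist_add_dist hH hd (hgap m m.lt_succ_self)
    rw [dist_comm (u m) x] at hstep
    calc dist x (u (m + 1)) ≤ dist x (u m) + dist (u m) (u (m + 1)) := dist_triangle _ _ _
      _ ≤ 2 * dist x (u m) + dist x a := by linarith
      _ ≤ 2 * ((2 ^ m - 1) * dist x a) + dist x a := by gcongr
      _ = (2 ^ (m + 1) - 1) * dist x a := by ring

theorem dist_lt_two_pow_mul (hY : IsGeodesicSpace Y) {f : X ≃ Y}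
    (hf : IsWeaklyQuasisymmetric H f) (hH : 0 ≤ H) {x a b : X} {m : ℕ}
    (hm : 2 * H * dist (f x) (f b) < m * dist (f x) (f a)) :
    dist x b < 2 ^ m * dist x a := by
  have hm0 : 0 < m := by
    by_contra! h0
    simp only [Nat.le_zero.1 h0, CharP.cast_eq_zero, zero_mul] at hm
    exact hm.not_ge (by positivity)
  have hm0' : (0 : ℝ) < m := by exact_mod_cast hm0
  have hd : 2 * H * (dist (f x) (f b) / m) < dist (f x) (f a) := by
    rw [← mul_div_assoc, div_lt_iff₀ hm0', mul_comm (dist _ _)]; exact hm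
  have hxa : 0 < dist x a := by
    refine dist_pos.2 fun hxa => ?_
    rw [hxa, dist_self] at hd
    exact hd.not_ge (by positivity)
  obtain ⟨v, hv0, hvm, hv⟩ := hY.exists_equally_spaced (f x) (f b) hm0
  have hchain := hf.dist_le_two_pow_sub_one_mul hH (u := f.symm ∘ v) (m := m) (by simp [hv0]) hd
    fun i hi => by simp [hv i hi.le (i + 1) hi]
  simp only [Function.comp_apply, hvm, Equiv.symm_apply_apply] at hchain
  linarith

theorem dist_mul_log_le (hY : IsGeodesicSpace Y) {f : X ≃ Y}
    (hf : IsWeaklyQuasisymmetric H f) (hH : 0 ≤ H) {x a b : X}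
    (h : 2 * dist x a ≤ dist x b) :
    dist (f x) (f a) * log (1 + dist x b / dist x a) ≤ 6 * H * dist (f x) (f b) := by
  rcases eq_or_ne x a with rfl | hxa
  · simpa using mul_nonneg (by linarith : 0 ≤ 6 * H) dist_nonneg
  have hr := dist_pos.2 hxa
  obtain ⟨m, hm, hlog⟩ := exists_two_pow_le_and_log_le ((le_div_iff₀ hr).2 h)
  have hmρ : m * dist (f x) (f a) ≤ 2 * H * dist (f x) (f b) :=
    not_lt.1 fun hlt => (hf.dist_lt_two_pow_mul hY hH hlt).not_ge ((le_div_iff₀ hr).1 hm)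
  nlinarith [dist_nonneg (x := f x) (y := f a)]

theorem div_le_qsDistortion (hX : IsGeodesicSpace X) (hY : IsGeodesicSpace Y) {f : X ≃ Y}
    (hf : IsWeaklyQuasisymmetric H f) (hH : 1 ≤ H) {x a b : X} (hxa : x ≠ a) (hxb : x ≠ b) :
    dist (f x) (f a) / dist (f x) (f b) ≤ qsDistortion H (dist x a / dist x b) := by
  have hr := dist_pos.2 hxa
  have hR := dist_pos.2 hxb
  have hD : 0 < dist (f x) (f b) := dist_pos.2 (f.injective.ne hxb)
  set t := dist x a / dist x b
  have ht : 0 < t := by positivity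
  have hexp_term : 0 ≤ 2 * H * (exp (2 * H * t) - 1) := by
    have hexp := one_le_exp (by positivity : 0 ≤ 2 * H * t)
    nlinarith
  have hlog_term := div_log_one_add_inv_nonneg (c := 6 * H) (by positivity) ht.le
  rw [qsDistortion, div_le_iff₀ hD]
  rcases le_or_gt (2 * dist x a) (dist x b) with hsmall | hlarge
  · have hlog : 0 < log (1 + t⁻¹) := log_pos (lt_add_of_pos_right 1 (inv_pos.2 ht))
    have hbound := hf.dist_mul_log_le hY (by linarith) hsmall
    rw [← inv_div] at hbound
    have hsmall_bound : dist (f x) (f a) ≤ 6 * H / log (1 + t⁻¹) * dist (f x) (f b) := by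
      rw [div_mul_eq_mul_div, le_div_iff₀ hlog]; exact hbound
    nlinarith
  · have ht2 : 1 / 2 < t := by rw [lt_div_iff₀ hR]; linarith
    have hbound := hf.dist_le_mul_exp hX (a := a) (by linarith) hxb
    have hexp : H * exp (H * t) ≤ 2 * H * (exp (2 * H * t) - 1) := by
      have hu : 3 / 2 ≤ exp (H * t) := by nlinarith [add_one_le_exp (H * t)]
      have hquad : 0 ≤ 2 * exp (H * t) * exp (H * t) - exp (H * t) - 2 := by nlinarith
      rw [show 2 * H * t = H * t + H * t by ring, exp_add]
      nlinarith [mul_nonneg (by linarith : 0 ≤ H) hquad]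
    nlinarith

end IsWeaklyQuasisymmetric

theorem isWeaklyQuasisymmetric_of_div_le {η : ℝ → ℝ} (hη : MonotoneOn η (Ici 0)) {f : X → Y}
    (hf : Function.Injective f)
    (h : ∀ x a b : X, x ≠ a → a ≠ b → x ≠ b →
      dist (f x) (f a) / dist (f x) (f b) ≤ η (dist x a / dist x b)) :
    IsWeaklyQuasisymmetric (max (η 1) 1) f := by
  intro x a b hab
  have hH : 1 ≤ max (η 1) 1 := le_max_right _ _
  rcases eq_or_ne x a with rfl | hxa
  · rw [dist_self]
    exact mul_nonneg (zero_le_one.trans hH) dist_nonneg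
  rcases eq_or_ne a b with rfl | hab'
  · exact le_mul_of_one_le_left dist_nonneg hH
  have hxb : x ≠ b := by
    rintro rfl
    exact hxa (dist_le_zero.1 (by simpa using hab))
  have hR := dist_pos.2 hxb
  rw [← div_le_iff₀ (dist_pos.2 (hf.ne hxb))]
  calc dist (f x) (f a) / dist (f x) (f b) ≤ η (dist x a / dist x b) := h x a b hxa hab' hxb
    _ ≤ η 1 := hη (mem_Ici.2 (by positivity)) (mem_Ici.2 zero_le_one) ((div_le_one hR).2 hab)
    _ ≤ max (η 1) 1 := le_max_left _ _

end

/-- Theorem 3.3: on geodesic metric spaces, a homeomorphism is weakly quasisymmetric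
iff it is quasisymmetric. -/
theorem weakly_quasisymmetric_iff_quasisymmetric {X Y : Type*} [MetricSpace X] [MetricSpace Y]
    (hX : IsGeodesicSpace X) (hY : IsGeodesicSpace Y) (f : X ≃ₜ Y) :
    (∃ H : ℝ, 1 ≤ H ∧ ∀ x a b : X, dist x a ≤ dist x b →
        dist (f x) (f a) ≤ H * dist (f x) (f b)) ↔
      (∃ η : ℝ → ℝ, η 0 = 0 ∧ StrictMonoOn η (Set.Ici 0) ∧
        ContinuousOn η (Set.Ici 0) ∧ Set.SurjOn η (Set.Ici 0) (Set.Ici 0) ∧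
        ∀ x a b : X, x ≠ a → a ≠ b → x ≠ b →
          dist (f x) (f a) / dist (f x) (f b) ≤ η (dist x a / dist x b)) := by
  constructor
  · rintro ⟨H, hH, hf⟩
    have hH0 : 0 < H := by linarith
    exact ⟨qsDistortion H, qsDistortion_zero H, qsDistortion_strictMonoOn hH0,
      qsDistortion_continuousOn H, qsDistortion_surjOn hH0, fun x a b hxa _ hxb =>
        IsWeaklyQuasisymmetric.div_le_qsDistortion hX hY (f := f.toEquiv) hf hH hxa hxb⟩
  · rintro ⟨η, -, hη, -, -, h⟩
    exact ⟨_, le_max_right _ _, isWeaklyQuasisymmetric_of_div_le hη.monotoneOn f.injective h⟩
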